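/- Convexity of vacancy numbers: for an unrestricted rigged configuration with vacancy numbers p_j^{(a)}, if the partition ν^{(a)} has no part of length j (i.e., m_j^{(a)} = 0), then p_j^{(a)} ≥ min(p_{j-1}^{(a)}, p_{j+1}^{(a)}); more precisely, the sequence j ↦ p_j^{(a)} satisfies −p_{j-1}^{(a)} + 2 p_j^{(a)} − p_{j+1}^{(a)} ≥ −Σ_{i=1}^{L} δ_{a,r_i} δ_{j,s_i} whenever m_j^{(a)} = 0. -/

import Mathlib

open scoped BigOperators

/-- A (raw) rigged configuration for type `A_{n-1}`: a sequence of partitions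
`ν^{(1)},…,ν^{(n-1)}` together with an integer rigging attached to each part;
component `a : Fin (n-1)` is the multiset of pairs `(length of part, rigging)`. -/
abbrev RCConf (n : ℕ) := Fin (n - 1) → Multiset (ℕ × ℤ)

/-- The Cartan matrix pairing `(α_a | α_b)` of `A_{n-1}`:
`2` if `a = b`, `-1` if `|a-b| = 1`, `0` otherwise. -/
def cartan (a b : ℕ) : ℤ := if a = b then 2 else if a + 1 = b ∨ b + 1 = a then -1 else 0

/-- The vacancy numbers
`p_j^{(a)}(ν) = ∑_{i=1}^L min(j,s_i) δ_{a,r_i} − ∑_b (α_a|α_b) ∑_{k≥1} min(j,k) m_k^{(b)}`.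
(The index `a : Fin (n-1)` encodes the root index `a+1 ∈ {1,…,n-1}`, and
`∑_k min(j,k) m_k^{(b)}` is computed as the sum of `min(j, length)` over the
parts of `ν^{(b)}`.) -/
def vac (n L : ℕ) (r s : Fin L → ℕ) (ν : RCConf n) (a : Fin (n - 1)) (j : ℕ) : ℤ :=
  (∑ i, if r i = a.1 + 1 then (min j (s i) : ℤ) else 0)
    - ∑ b : Fin (n - 1), cartan (a.1 + 1) (b.1 + 1) *
        ((ν b).map fun p => (min j p.1 : ℤ)).sum

/-- The size constraint `|ν^{(a)}| = ∑_{i=1}^L s_i min(r_i,a) − ∑_{j=1}^{a} λ_j`. -/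
def sizeEq (n L : ℕ) (r s : Fin L → ℕ) (lam : Fin n → ℤ) (ν : RCConf n) : Prop :=
  ∀ a : Fin (n - 1),
    ((ν a).map fun p => (p.1 : ℤ)).sum
      = (∑ i, (s i : ℤ) * min (r i : ℤ) (a.1 + 1))
        - ∑ k : Fin n, (if k.1 ≤ a.1 then lam k else 0)

/-- `IsURC n L r s M lam ν` : `ν` is an unrestricted rigged configuration in
`RC(λ,B)`: all parts have positive length, the sizes `|ν^{(a)}|` are as
prescribed by `λ` and `B`, and each rigging `x` of a part of length `j` of
`ν^{(a)}` satisfies `M_j^{(a)} ≤ x ≤ p_j^{(a)}(ν)` where `M` is the given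
lower bound (for the Deka–Schilling lower bound this is exactly the set of
unrestricted rigged configurations). -/
def IsURC (n L : ℕ) (r s : Fin L → ℕ) (M : Fin (n - 1) → ℕ → ℤ) (lam : Fin n → ℤ)
    (ν : RCConf n) : Prop :=
  (∀ a, ∀ p ∈ ν a, 1 ≤ p.1) ∧ sizeEq n L r s lam ν ∧
    (∀ a, ∀ p ∈ ν a, M a p.1 ≤ p.2 ∧ p.2 ≤ vac n L r s ν a p.1)

/-- `cc(ν) = ½ ∑_{a,b} ∑_{j,k} (α_a|α_b) min(j,k) m_j^{(a)} m_k^{(b)}`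
(the double sum is always even, so integer division by 2 is exact). -/
def ccShape (n : ℕ) (ν : RCConf n) : ℤ :=
  (∑ a : Fin (n - 1), ∑ b : Fin (n - 1), cartan (a.1 + 1) (b.1 + 1) *
      ((ν a).map fun p => ((ν b).map fun q => (min p.1 q.1 : ℤ)).sum).sum) / 2

/-- The cocharge `cc(ν,J) = cc(ν) + |J|`, where `|J|` is the sum of all riggings. -/
def cc (n : ℕ) (ν : RCConf n) : ℤ :=
  ccShape n ν + ∑ a : Fin (n - 1), ((ν a).map Prod.snd).sum

/-!
For `j ≥ 1` the second difference of `i ↦ min i k` is `δ_{j,k}`, so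
`-p_{j-1}^{(a)} + 2 p_j^{(a)} - p_{j+1}^{(a)} = ∑_i δ_{a,r_i} δ_{j,s_i} - ∑_b (α_a|α_b) m_j^{(b)}`.
When `m_j^{(a)} = 0` only the off-diagonal Cartan entries, which are `≤ 0`, survive, so this second
difference is at least `∑_i δ_{a,r_i} δ_{j,s_i} ≥ 0`: `p^{(a)}` is convex at `j`.
-/

/-- At `j = 0` the truncated subtraction makes this `f 0 - f 1`. -/
def secondDiff (f : ℕ → ℤ) (j : ℕ) : ℤ := -f (j - 1) + 2 * f j - f (j + 1)

section secondDiff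

variable {ι : Type*} (j : ℕ)

lemma secondDiff_sub (f g : ℕ → ℤ) :
    secondDiff (fun i => f i - g i) j = secondDiff f j - secondDiff g j := by
  unfold secondDiff; ring

lemma secondDiff_const_mul (c : ℤ) (f : ℕ → ℤ) :
    secondDiff (fun i => c * f i) j = c * secondDiff f j := by
  unfold secondDiff; ring

lemma secondDiff_ite_zero (P : Prop) [Decidable P] (f : ℕ → ℤ) :
    secondDiff (fun i => if P then f i else 0) j = if P then secondDiff f j else 0 := by
  split_ifs <;> simp [secondDiff]

lemma secondDiff_finset_sum (t : Finset ι) (f : ι → ℕ → ℤ) :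
    secondDiff (fun i => ∑ x ∈ t, f x i) j = ∑ x ∈ t, secondDiff (f x) j := by
  simp only [secondDiff, Finset.sum_sub_distrib, Finset.sum_add_distrib, Finset.sum_neg_distrib,
    Finset.mul_sum]

lemma secondDiff_multiset_sum (m : Multiset ι) (f : ι → ℕ → ℤ) :
    secondDiff (fun i => (m.map (f · i)).sum) j = (m.map fun x => secondDiff (f x) j).sum := by
  simp only [secondDiff, Multiset.sum_map_sub, Multiset.sum_map_add, Multiset.sum_map_neg,
    Multiset.sum_map_mul_left]

lemma min_le_of_secondDiff_nonneg {f : ℕ → ℤ} (h : 0 ≤ secondDiff f j) :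
    min (f (j - 1)) (f (j + 1)) ≤ f j := by
  unfold secondDiff at h; omega

lemma secondDiff_min_natCast {j : ℕ} (hj : 1 ≤ j) (k : ℕ) :
    secondDiff (fun i => min (i : ℤ) k) j = if k = j then 1 else 0 := by
  simp only [secondDiff]; split <;> omega

end secondDiff

lemma Multiset.sum_map_boole {α R : Type*} [AddCommMonoidWithOne R] (m : Multiset α)
    (P : α → Prop) [DecidablePred P] :
    (m.map fun p => if P p then (1 : R) else 0).sum = (m.filter P).card := by
  induction m using Multiset.induction with
  | empty => simp
  | cons x t ih => by_cases h : P x <;> simp [h, ih, add_comm]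

lemma cartan_nonpos_of_ne {a b : ℕ} (h : a ≠ b) : cartan a b ≤ 0 := by
  unfold cartan; split_ifs <;> omega

lemma secondDiff_vac (n L : ℕ) (r s : Fin L → ℕ) (ν : RCConf n) (a : Fin (n - 1)) {j : ℕ}
    (hj : 1 ≤ j) :
    secondDiff (vac n L r s ν a) j =
      (∑ i, if r i = a.1 + 1 ∧ s i = j then (1 : ℤ) else 0)
        - ∑ b : Fin (n - 1), cartan (a.1 + 1) (b.1 + 1) * ((ν b).filter fun p => p.1 = j).card := by
  unfold vac
  simp only [secondDiff_sub, secondDiff_finset_sum, secondDiff_ite_zero,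
    secondDiff_const_mul, secondDiff_multiset_sum, secondDiff_min_natCast hj, ite_and,
    Multiset.sum_map_boole]

lemma cartan_mul_multiplicity_sum_nonpos {n : ℕ} (ν : RCConf n) (a : Fin (n - 1)) {j : ℕ}
    (hm : ((ν a).filter fun p => p.1 = j).card = 0) :
    ∑ b : Fin (n - 1), cartan (a.1 + 1) (b.1 + 1) * ((ν b).filter fun p => p.1 = j).card ≤ 0 := by
  refine Finset.sum_nonpos fun b _ => ?_
  rcases eq_or_ne b a with rfl | hb
  · simp [hm]
  · exact mul_nonpos_of_nonpos_of_nonneg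
      (cartan_nonpos_of_ne fun h => hb (Fin.ext (by omega)).symm) (by positivity)

theorem vacancy_numbers_convex_general
    (n L : ℕ) (r s : Fin L → ℕ)
    (ν : RCConf n)
    (a : Fin (n - 1)) (j : ℕ) (hj : 1 ≤ j)
    (hm : ((ν a).filter fun p => p.1 = j).card = 0) :
    min (vac n L r s ν a (j - 1)) (vac n L r s ν a (j + 1)) ≤ vac n L r s ν a j ∧
    -(∑ i, if r i = a.1 + 1 ∧ s i = j then (1 : ℤ) else 0)
      ≤ -(vac n L r s ν a (j - 1)) + 2 * vac n L r s ν a j - vac n L r s ν a (j + 1) := by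
  have hδ : 0 ≤ ∑ i, if r i = a.1 + 1 ∧ s i = j then (1 : ℤ) else 0 :=
    Finset.sum_nonneg fun i _ => by positivity
  have hconvex : ∑ i, (if r i = a.1 + 1 ∧ s i = j then (1 : ℤ) else 0)
      ≤ secondDiff (vac n L r s ν a) j := by
    rw [secondDiff_vac n L r s ν a hj]
    linarith [cartan_mul_multiplicity_sum_nonpos ν a hm]
  refine ⟨min_le_of_secondDiff_nonneg j (hδ.trans hconvex), ?_⟩
  unfold secondDiff at hconvex
  linarith

/-- Convexity of vacancy numbers: for an unrestricted rigged
configuration with vacancy numbers `p_j^{(a)}`, if the partition `ν^{(a)}` has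
no part of length `j` (i.e. `m_j^{(a)} = 0`), then
`p_j^{(a)} ≥ min(p_{j-1}^{(a)}, p_{j+1}^{(a)})`; more precisely,
`−p_{j-1}^{(a)} + 2 p_j^{(a)} − p_{j+1}^{(a)} ≥ −∑_{i=1}^L δ_{a,r_i} δ_{j,s_i}`
whenever `m_j^{(a)} = 0`. -/
theorem vacancy_numbers_convex
    (n L : ℕ) (hn : 2 ≤ n) (r s : Fin L → ℕ)
    (hr : ∀ i, 1 ≤ r i ∧ r i ≤ n - 1) (hs : ∀ i, 1 ≤ s i)
    (ν : RCConf n) (hpos : ∀ a, ∀ p ∈ ν a, 1 ≤ p.1)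
    (a : Fin (n - 1)) (j : ℕ) (hj : 1 ≤ j)
    (hm : ((ν a).filter fun p => p.1 = j).card = 0) :
    min (vac n L r s ν a (j - 1)) (vac n L r s ν a (j + 1)) ≤ vac n L r s ν a j ∧
    -(∑ i, if r i = a.1 + 1 ∧ s i = j then (1 : ℤ) else 0)
      ≤ -(vac n L r s ν a (j - 1)) + 2 * vac n L r s ν a j - vac n L r s ν a (j + 1) :=
  vacancy_numbers_convex_general n L r s ν a j hj hm
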